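/- In the generalized Pólya urn with qₙ(k) = P[Nₙ = k], for all n, k ≥ 0: qₙ(k−1)·q_{n+1}(k+1) ≤ qₙ(k)·q_{n+1}(k). -/

import Mathlib

/-!
Multiplying by `Bₙ` and substituting the recurrence for `q_{n+1}(k)` and `q_{n+1}(k+1)` turns
the claim into the auxiliary inequality
`(Bₙ - k) qₙ(k)² - (Bₙ - k - 1) qₙ(k-1) qₙ(k+1) - qₙ(k-1) qₙ(k) ≥ 0`.
This is proved by induction on `n`, together with log-concavity of `qₙ` and the fact that the
support of `qₙ` is the interval `[w, w + n] ⊆ [1, Bₙ - 1]`. After clearing denominators, both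
inequalities for `q_{n+1}` are nonnegative combinations of those for `qₙ`, the zeros at the
ends of the support being handled separately. The auxiliary inequality for `q_{n+1}` first comes
out with `Bₙ + 1` in place of `B_{n+1}`; raising the parameter only adds a multiple of the
log-concavity gap.
-/

open Function Set

namespace PolyaUrn

noncomputable def step (β : ℝ) (x : ℤ → ℝ) (k : ℤ) : ℝ :=
  (((k : ℝ) - 1) * x (k - 1) + (β - k) * x k) / β

def LogConcave (x : ℤ → ℝ) : Prop :=
  ∀ k : ℤ, x (k - 1) * x (k + 1) ≤ x k ^ 2

def AuxIneq (β : ℝ) (x : ℤ → ℝ) : Prop :=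
  ∀ k : ℤ, 0 ≤ (β - k) * x k ^ 2 - (β - k - 1) * (x (k - 1) * x (k + 1)) - x (k - 1) * x k

structure Admissible (β : ℝ) (lo hi : ℤ) (x : ℤ → ℝ) : Prop where
  nonneg : 0 ≤ x
  support_eq : support x = Icc lo hi
  one_le : 1 ≤ lo
  le : lo ≤ hi
  add_one_le : (hi : ℝ) + 1 ≤ β
  logConcave : LogConcave x

lemma mul_nonneg_of_ne_zero_imp {R : Type*} [MulZeroClass R] [Preorder R] [PosMulMono R]
    {t D : R} (hD : 0 ≤ D) (ht : D ≠ 0 → 0 ≤ t) : 0 ≤ t * D := by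
  rcases eq_or_ne D 0 with h | h
  · simp [h]
  · exact mul_nonneg (ht h) hD

section step

variable {β : ℝ} {x : ℤ → ℝ}

lemma step_sub_one (k : ℤ) :
    step β x (k - 1) = (((k : ℝ) - 2) * x (k - 2) + (β - k + 1) * x (k - 1)) / β := by
  rw [step, sub_sub, one_add_one_eq_two]
  push_cast
  ring

lemma step_add_one (k : ℤ) :
    step β x (k + 1) = ((k : ℝ) * x k + (β - k - 1) * x (k + 1)) / β := by
  rw [step, add_sub_cancel_right]
  push_cast
  ring

end step

lemma LogConcave.apply_sub_one {x : ℤ → ℝ} (h : LogConcave x) (k : ℤ) :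
    x (k - 2) * x k ≤ x (k - 1) ^ 2 := by
  simpa [sub_sub, one_add_one_eq_two] using h (k - 1)

lemma AuxIneq.apply_sub_one {β : ℝ} {x : ℤ → ℝ} (h : AuxIneq β x) (k : ℤ) :
    0 ≤ (β - k + 1) * x (k - 1) ^ 2 - (β - k) * (x (k - 2) * x k) - x (k - 2) * x (k - 1) := by
  have := h (k - 1)
  rw [sub_sub k, one_add_one_eq_two, sub_add_cancel] at this
  push_cast at this
  linear_combination this

namespace Admissible

variable {β : ℝ} {lo hi : ℤ} {x : ℤ → ℝ}

lemma ne_zero_iff (h : Admissible β lo hi x) {j : ℤ} : x j ≠ 0 ↔ lo ≤ j ∧ j ≤ hi := by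
  rw [← mem_support, h.support_eq, mem_Icc]

lemma eq_zero_iff (h : Admissible β lo hi x) {j : ℤ} :
    x j = 0 ↔ ¬(lo ≤ j ∧ j ≤ hi) := by
  rw [← h.ne_zero_iff, not_not]

lemma pos_of_ne_zero (h : Admissible β lo hi x) {j : ℤ} (hj : x j ≠ 0) : 0 < x j :=
  (h.nonneg j).lt_of_ne' hj

lemma bounds_of_ne_zero (h : Admissible β lo hi x) {j : ℤ} (hj : x j ≠ 0) :
    1 ≤ (j : ℝ) ∧ (j : ℝ) + 1 ≤ β := by
  obtain ⟨hlo, hhi⟩ := h.ne_zero_iff.mp hj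
  have hhi' : (j : ℝ) ≤ hi := by exact_mod_cast hhi
  exact ⟨by exact_mod_cast h.one_le.trans hlo, by linarith [h.add_one_le]⟩

lemma two_le_of_ne_zero (h : Admissible β lo hi x) {k : ℤ} (hk : x (k - 1) ≠ 0) :
    2 ≤ (k : ℝ) := by
  have := (h.bounds_of_ne_zero hk).1
  push_cast at this
  linarith

lemma pos (h : Admissible β lo hi x) : 0 < β := by
  have hlo : (1 : ℝ) ≤ hi := by exact_mod_cast h.one_le.trans h.le
  linarith [h.add_one_le]

lemma mul_eq_zero_of_eq_zero (h : Admissible β lo hi x) {j : ℤ} (hj : x j = 0) :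
    x (j - 1) * x (j + 1) = 0 :=
  le_antisymm (by simpa [hj] using h.logConcave j) (mul_nonneg (h.nonneg _) (h.nonneg _))

lemma mul_eq_zero_of_apply_sub_one_eq_zero (h : Admissible β lo hi x) {k : ℤ}
    (hk : x (k - 1) = 0) : x (k - 2) * x k = 0 := by
  simpa [sub_sub, one_add_one_eq_two] using h.mul_eq_zero_of_eq_zero hk

lemma mul_eq_zero_of_mul_eq_zero (h : Admissible β lo hi x) {k : ℤ}
    (hk : x (k - 1) * x k = 0) : x (k - 2) * x (k + 1) = 0 := by
  by_contra hne
  simp only [mul_eq_zero, h.eq_zero_iff] at hk hne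
  omega

lemma mul_le_mul (h : Admissible β lo hi x) (k : ℤ) :
    x (k - 2) * x (k + 1) ≤ x (k - 1) * x k := by
  rcases eq_or_ne (x (k - 1) * x k) 0 with h0 | h0
  · rw [h0, h.mul_eq_zero_of_mul_eq_zero h0]
  have hpos : 0 < x (k - 1) * x k := (mul_nonneg (h.nonneg _) (h.nonneg _)).lt_of_ne' h0
  have := _root_.mul_le_mul (h.logConcave.apply_sub_one k) (h.logConcave k)
    (mul_nonneg (h.nonneg _) (h.nonneg _)) (sq_nonneg _)
  refine le_of_mul_le_mul_right ?_ hpos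
  linear_combination this

lemma sub_one_mul_nonneg (h : Admissible β lo hi x) (k : ℤ) :
    0 ≤ ((k : ℝ) - 1) * x (k - 1) :=
  mul_nonneg_of_ne_zero_imp (h.nonneg _) fun hk => by
    have := (h.bounds_of_ne_zero hk).1
    push_cast at this
    linarith

lemma sub_mul_nonneg (h : Admissible β lo hi x) (k : ℤ) : 0 ≤ (β - k) * x k :=
  mul_nonneg_of_ne_zero_imp (h.nonneg _) fun hk => by linarith [(h.bounds_of_ne_zero hk).2]

lemma step_nonneg (h : Admissible β lo hi x) : 0 ≤ step β x := fun k =>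
  div_nonneg (add_nonneg (h.sub_one_mul_nonneg k) (h.sub_mul_nonneg k)) h.pos.le

lemma support_step (h : Admissible β lo hi x) : support (step β x) = Icc lo (hi + 1) := by
  ext k
  rw [mem_support, mem_Icc]
  constructor
  · intro hk
    by_contra hout
    have h1 : x (k - 1) = 0 := h.eq_zero_iff.mpr (by omega)
    have h2 : x k = 0 := h.eq_zero_iff.mpr (by omega)
    simp [step, h1, h2] at hk
  · intro hk
    refine (div_pos ?_ h.pos).ne'
    rcases le_or_gt k hi with hkhi | hkhi
    · have hxk : x k ≠ 0 := h.ne_zero_iff.mpr ⟨hk.1, hkhi⟩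
      have hcoeff : 0 < β - k := by linarith [(h.bounds_of_ne_zero hxk).2]
      exact add_pos_of_nonneg_of_pos (h.sub_one_mul_nonneg k)
        (mul_pos hcoeff (h.pos_of_ne_zero hxk))
    · have hxk : x (k - 1) ≠ 0 := h.ne_zero_iff.mpr ⟨by linarith [h.le], by omega⟩
      have hcoeff : 0 < (k : ℝ) - 1 := by
        have : (2 : ℝ) ≤ k := by exact_mod_cast (by linarith [h.one_le, h.le] : (2 : ℤ) ≤ k)
        linarith
      exact add_pos_of_pos_of_nonneg (mul_pos hcoeff (h.pos_of_ne_zero hxk)) (h.sub_mul_nonneg k)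

lemma logConcave_step (h : Admissible β lo hi x) : LogConcave (step β x) := by
  intro k
  rw [step_sub_one, step_add_one, step, div_mul_div_comm, div_pow, ← sq]
  refine div_le_div_of_nonneg_right ?_ (sq_nonneg β)
  -- With `(a, b, c, d) = (x (k - 2), x (k - 1), x k, x (k + 1))` the goal is
  -- `0 ≤ k (k - 2) (b² - ac) + (β - k + 1) (β - k - 1) (c² - bd)`
  -- `  + (k - 2) (β - k - 1) (bc - ad) + (b - c)²`,
  -- and each weight is nonnegative wherever the gap it multiplies is nonzero.
  have hb : x (k - 1) ≠ 0 → 2 ≤ (k : ℝ) := h.two_le_of_ne_zero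
  have hc : x k ≠ 0 → (k : ℝ) + 1 ≤ β := fun hk => (h.bounds_of_ne_zero hk).2
  have W₁ : 0 ≤ (k * (k - 2)) * (x (k - 1) ^ 2 - x (k - 2) * x k) := by
    refine mul_nonneg_of_ne_zero_imp (sub_nonneg.2 (h.logConcave.apply_sub_one k)) fun hD => ?_
    have : x (k - 1) ≠ 0 := fun h0 =>
      hD (by rw [h0, h.mul_eq_zero_of_apply_sub_one_eq_zero h0]; ring)
    have := hb this
    exact mul_nonneg (by linarith) (by linarith)
  have W₂ : 0 ≤ ((β - k + 1) * (β - k - 1)) * (x k ^ 2 - x (k - 1) * x (k + 1)) := by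
    refine mul_nonneg_of_ne_zero_imp (sub_nonneg.2 (h.logConcave k)) fun hD => ?_
    have : x k ≠ 0 := fun h0 => hD (by rw [h0, h.mul_eq_zero_of_eq_zero h0]; ring)
    have := hc this
    exact mul_nonneg (by linarith) (by linarith)
  have W₃ : 0 ≤ ((k - 2) * (β - k - 1)) * (x (k - 1) * x k - x (k - 2) * x (k + 1)) := by
    refine mul_nonneg_of_ne_zero_imp (sub_nonneg.2 (h.mul_le_mul k)) fun hD => ?_
    have : x (k - 1) * x k ≠ 0 := fun h0 =>
      hD (by rw [h0, h.mul_eq_zero_of_mul_eq_zero h0]; ring)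
    rw [mul_ne_zero_iff] at this
    exact mul_nonneg (by linarith [hb this.1]) (by linarith [hc this.2])
  linear_combination W₁ + W₂ + W₃ + sq_nonneg (x (k - 1) - x k)

lemma auxIneq_step (h : Admissible β lo hi x) (haux : AuxIneq β x) :
    AuxIneq (β + 1) (step β x) := by
  intro k
  have hc : x k ≠ 0 → (k : ℝ) + 1 ≤ β := fun hk => (h.bounds_of_ne_zero hk).2
  suffices key : 0 ≤ (β - k + 1) * ((k - 1) * x (k - 1) + (β - k) * x k) ^ 2
      - (β - k) * (((k - 2) * x (k - 2) + (β - k + 1) * x (k - 1))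
        * (k * x k + (β - k - 1) * x (k + 1)))
      - ((k - 2) * x (k - 2) + (β - k + 1) * x (k - 1))
        * ((k - 1) * x (k - 1) + (β - k) * x k) by
    rw [step_sub_one, step_add_one, step]
    exact (div_nonneg key (sq_nonneg β)).trans_eq (by ring)
  rcases eq_or_ne (x (k - 1)) 0 with hb | hb
  · have hac := h.mul_eq_zero_of_apply_sub_one_eq_zero hb
    have had := h.mul_eq_zero_of_mul_eq_zero (k := k) (by rw [hb, zero_mul])
    have hX : 0 ≤ (β - k + 1) * ((β - k) * x k) ^ 2 :=
      mul_nonneg_of_ne_zero_imp (sq_nonneg _) fun hD => by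
        have : x k ≠ 0 := fun h0 => hD (by rw [h0]; ring)
        linarith [hc this]
    rw [hb]
    linear_combination
      hX + (β - k) * (k - 2) * (k + 1) * hac + (β - k) * (k - 2) * (β - k - 1) * had
  · have hk := h.two_le_of_ne_zero hb
    -- `x (k - 1) * key` equals `T₁ + T₂`, built from the auxiliary inequalities at `k - 1`, `k`.
    have T₁ : 0 ≤ ((k - 2) * ((k - 1) * x (k - 1) + (β - k) * x k))
        * ((β - k + 1) * x (k - 1) ^ 2 - (β - k) * (x (k - 2) * x k) - x (k - 2) * x (k - 1)) :=
      mul_nonneg (mul_nonneg (by linarith)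
        (add_nonneg (mul_nonneg (by linarith) (h.nonneg _)) (h.sub_mul_nonneg k)))
        (haux.apply_sub_one k)
    have T₂ : 0 ≤ ((β - k) * ((β - k + 1) * x (k - 1) + (k - 2) * x (k - 2)))
        * ((β - k) * x k ^ 2 - (β - k - 1) * (x (k - 1) * x (k + 1)) - x (k - 1) * x k) := by
      refine mul_nonneg_of_ne_zero_imp (haux k) fun hD => ?_
      have : x k ≠ 0 := fun h0 => hD (by rw [h0, h.mul_eq_zero_of_eq_zero h0]; ring)
      have := hc this
      exact mul_nonneg (by linarith) (add_nonneg (mul_nonneg (by linarith) (h.nonneg _))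
        (mul_nonneg (by linarith) (h.nonneg _)))
    refine nonneg_of_mul_nonneg_right ?_ (h.pos_of_ne_zero hb)
    linear_combination T₁ + T₂

lemma step (h : Admissible β lo hi x) {β' : ℝ} (hβ' : β + 1 ≤ β') :
    Admissible β' lo (hi + 1) (step β x) where
  nonneg := h.step_nonneg
  support_eq := h.support_step
  one_le := h.one_le
  le := by linarith [h.le]
  add_one_le := by push_cast; linarith [h.add_one_le]
  logConcave := h.logConcave_step

end Admissible

lemma AuxIneq.mono {β β' : ℝ} {x : ℤ → ℝ} (h : AuxIneq β x) (hlc : LogConcave x)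
    (hβ : β ≤ β') :
    AuxIneq β' x := fun k => by
  linear_combination h k + mul_nonneg (sub_nonneg.2 hβ) (sub_nonneg.2 (hlc k))

lemma AuxIneq.mul_step_le {β : ℝ} {x : ℤ → ℝ} (h : AuxIneq β x) (hβ : 0 < β) (k : ℤ) :
    x (k - 1) * step β x (k + 1) ≤ x k * step β x k := by
  rw [step_add_one, step, mul_div_assoc', mul_div_assoc']
  refine div_le_div_of_nonneg_right ?_ hβ.le
  linear_combination h k

section initial

variable {w : ℤ}

lemma admissible_ite {β : ℝ} (hw : 1 ≤ w) (hβ : (w : ℝ) + 1 ≤ β) :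
    Admissible β w w (fun k => if k = w then 1 else 0) where
  nonneg k := by dsimp only; split_ifs <;> norm_num
  support_eq := by
    ext k
    rw [mem_support, mem_Icc]
    split_ifs <;> simp <;> omega
  one_le := hw
  le := le_rfl
  add_one_le := hβ
  logConcave k := by dsimp only; split_ifs <;> first | omega | norm_num

lemma auxIneq_ite {β : ℝ} (hβ : (w : ℝ) ≤ β) :
    AuxIneq β (fun k => if k = w then 1 else 0) := by
  intro k
  dsimp only
  split_ifs <;> subst_vars <;> first | omega | norm_num <;> linarith

end initial

end PolyaUrn

theorem stmt19 (b w : ℕ) (hb : 1 ≤ b) (hw : 1 ≤ w) (B : ℕ → ℕ) (hB : StrictMono B)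
    (hB0 : B 0 = b + w) (q : ℕ → ℤ → ℝ)
    (hq0 : ∀ k : ℤ, q 0 k = if k = (w : ℤ) then 1 else 0)
    (hrec : ∀ n : ℕ, ∀ k : ℤ,
      q (n + 1) k = ((k : ℝ) - 1) / (B n) * q n (k - 1) + (1 - (k : ℝ) / (B n)) * q n k) :
    ∀ n : ℕ, ∀ k : ℤ, 0 ≤ k →
      q n (k - 1) * q (n + 1) (k + 1) ≤ q n k * q (n + 1) k := by
  have hBpos (n : ℕ) : (0 : ℝ) < B n :=
    Nat.cast_pos.mpr (by have := hB.monotone n.zero_le; omega)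
  have hstep (n : ℕ) : q (n + 1) = PolyaUrn.step (B n) (q n) := funext fun k => by
    have := (hBpos n).ne'
    rw [hrec, PolyaUrn.step]
    field_simp
  have hinv (n : ℕ) :
      PolyaUrn.Admissible (B n) w (w + n) (q n) ∧ PolyaUrn.AuxIneq (B n) (q n) := by
    induction n with
    | zero =>
      have hwB : w + 1 ≤ B 0 := by omega
      rw [funext hq0, Nat.cast_zero, add_zero]
      exact ⟨PolyaUrn.admissible_ite (by exact_mod_cast hw) (by exact_mod_cast hwB),
        PolyaUrn.auxIneq_ite (by exact_mod_cast hwB.trans' w.le_succ)⟩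
    | succ n ih =>
      have hBB : (B n : ℝ) + 1 ≤ B (n + 1) := by exact_mod_cast hB (Nat.lt_succ_self n)
      have h' := ih.1.step hBB
      rw [hstep, Nat.cast_succ, ← add_assoc]
      exact ⟨h', (ih.1.auxIneq_step ih.2).mono h'.logConcave hBB⟩
  intro n k _
  rw [hstep n]
  exact (hinv n).2.mul_step_le (hBpos n) k
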